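/- arXiv:1102.5109 — 2 statements merged into one kernel-verified Lean document; each statement's English description precedes it below -/
import Mathlib

section
/- For every integer n ≥ 1 the Stern polynomials satisfy the following symmetry property: B_{2^{n+1} - i}(t) - B_{2^n + i}(t) = t(t-1)·B_{2^{n-1} - i}(t) for all i with 0 ≤ i ≤ 2^{n-1}, and B_{2^{n+1} - i}(t) - B_{2^n + i}(t) = -t(t-1)·B_{i - 2^{n-1}}(t) for all i with 2^{n-1}+1 ≤ i ≤ 2^n. -/
open Polynomial
/-- The Stern polynomials: `B 0 = 0`, `B 1 = 1`, `B (2n) = t * B n`,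
`B (2n+1) = B n + B (n+1)`. -/
noncomputable def stern : ℕ → Polynomial ℤ
  | 0 => 0
  | 1 => 1
  | n + 2 =>
    if _h : n % 2 = 0 then
      X * stern (n / 2 + 1)
    else
      stern (n / 2 + 1) + stern (n / 2 + 2)
  decreasing_by all_goals omega

lemma stern_two_mul (n : ℕ) : stern (2 * n) = X * stern n := by
  match n with
  | 0 => simp [stern]
  | n + 1 =>
    have h : 2 * (n + 1) = 2 * n + 2 := by ring
    rw [h, stern]
    simp [Nat.mul_mod_right, Nat.mul_div_cancel_left]

lemma stern_two_mul_add_one (n : ℕ) : stern (2 * n + 1) = stern n + stern (n + 1) := by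
  match n with
  | 0 => simp [stern]
  | n + 1 =>
    have h : 2 * (n + 1) + 1 = (2 * n + 1) + 2 := by ring
    rw [h, stern]
    have : (2 * n + 1) % 2 = 1 := by omega
    simp [this]
    have e : (2 * n + 1) / 2 = n := by omega
    rw [e]

lemma stern_key (k : ℕ) :
    (∀ i : ℕ, i ≤ 2 ^ k →
      stern (2 ^ (k + 2) - i) - stern (2 ^ (k + 1) + i) =
        X * (X - 1) * stern (2 ^ k - i)) ∧
    (∀ i : ℕ, 2 ^ k + 1 ≤ i → i ≤ 2 ^ (k + 1) →
      stern (2 ^ (k + 2) - i) - stern (2 ^ (k + 1) + i) =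
        -(X * (X - 1)) * stern (i - 2 ^ k)) := by
  induction k with
  | zero =>
    have h1 : stern 1 = 1 := by simp [stern]
    have h2 : stern 2 = X := by have := stern_two_mul 1; simpa [h1] using this
    have h3 : stern 3 = 1 + X := by have := stern_two_mul_add_one 1; simpa [h1, h2] using this
    have h4 : stern 4 = X * X := by have := stern_two_mul 2; simpa [h2] using this
    constructor
    · intro i hi
      interval_cases i
      · norm_num [h2, h4, h1]; ring
      · norm_num [h3]
        simp [stern]
    · intro i hi1 hi2
      interval_cases i
      norm_num [h2, h4, h1]; ring
  | succ k ih =>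
    obtain ⟨ih1, ih2⟩ := ih
    have p1 : 2 ^ (k + 1) = 2 * 2 ^ k := by ring
    have p2 : 2 ^ (k + 2) = 2 * 2 ^ (k + 1) := by ring
    have p3 : 2 ^ (k + 3) = 2 * 2 ^ (k + 2) := by ring
    have pk : 1 ≤ 2 ^ k := Nat.one_le_two_pow
    constructor
    · intro i hi
      rcases Nat.even_or_odd i with ⟨j, rfl⟩ | ⟨j, rfl⟩
      · -- i = j + j
        have hj : j ≤ 2 ^ k := by omega
        have e1 : 2 ^ (k + 3) - (j + j) = 2 * (2 ^ (k + 2) - j) := by omega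
        have e2 : 2 ^ (k + 2) + (j + j) = 2 * (2 ^ (k + 1) + j) := by omega
        have e3 : 2 ^ (k + 1) - (j + j) = 2 * (2 ^ k - j) := by omega
        rw [e1, e2, e3, stern_two_mul, stern_two_mul, stern_two_mul]
        linear_combination X * ih1 j hj
      · -- i = 2j+1
        have hj : j + 1 ≤ 2 ^ k := by omega
        have e1 : 2 ^ (k + 3) - (2 * j + 1) = 2 * (2 ^ (k + 2) - (j + 1)) + 1 := by omega
        have e2 : 2 ^ (k + 2) + (2 * j + 1) = 2 * (2 ^ (k + 1) + j) + 1 := by omega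
        have e3 : 2 ^ (k + 1) - (2 * j + 1) = 2 * (2 ^ k - (j + 1)) + 1 := by omega
        rw [e1, e2, e3, stern_two_mul_add_one, stern_two_mul_add_one, stern_two_mul_add_one]
        have e4 : 2 ^ (k + 2) - (j + 1) + 1 = 2 ^ (k + 2) - j := by omega
        have e5 : 2 ^ k - (j + 1) + 1 = 2 ^ k - j := by omega
        rw [e4, e5]
        have h6 := ih1 (j + 1) hj
        rw [show 2 ^ (k + 1) + (j + 1) = 2 ^ (k + 1) + j + 1 by omega] at h6
        linear_combination h6 + ih1 j (by omega)
    · intro i hi1 hi2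
      rcases Nat.even_or_odd i with ⟨j, rfl⟩ | ⟨j, rfl⟩
      · have hj1 : 2 ^ k + 1 ≤ j := by omega
        have hj2 : j ≤ 2 ^ (k + 1) := by omega
        have e1 : 2 ^ (k + 3) - (j + j) = 2 * (2 ^ (k + 2) - j) := by omega
        have e2 : 2 ^ (k + 2) + (j + j) = 2 * (2 ^ (k + 1) + j) := by omega
        have e3 : j + j - 2 ^ (k + 1) = 2 * (j - 2 ^ k) := by omega
        rw [e1, e2, e3, stern_two_mul, stern_two_mul, stern_two_mul]
        linear_combination X * ih2 j hj1 hj2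
      · rcases eq_or_lt_of_le (show 2 ^ k ≤ j by omega) with hj | hj
        · -- boundary j = 2^k
          have e1 : 2 ^ (k + 3) - (2 * j + 1) = 2 * (2 ^ (k + 2) - (j + 1)) + 1 := by omega
          have e2 : 2 ^ (k + 2) + (2 * j + 1) = 2 * (2 ^ (k + 1) + j) + 1 := by omega
          have e3 : 2 * j + 1 - 2 ^ (k + 1) = 1 := by omega
          rw [e1, e2, e3, stern_two_mul_add_one, stern_two_mul_add_one]
          have e4 : 2 ^ (k + 2) - (j + 1) + 1 = 2 ^ (k + 2) - j := by omega
          rw [e4]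
          have hA := ih1 j (by omega)
          have hB := ih2 (j + 1) (by omega) (by omega)
          rw [show 2 ^ (k + 1) + (j + 1) = 2 ^ (k + 1) + j + 1 by omega] at hB
          have s0 : stern (2 ^ k - j) = 0 := by
            have : 2 ^ k - j = 0 := by omega
            rw [this]; simp [stern]
          have s1 : stern (j + 1 - 2 ^ k) = 1 := by
            have : j + 1 - 2 ^ k = 1 := by omega
            rw [this]; simp [stern]
          have e5 : 2 ^ (k + 2) - (j + 1) = 2 ^ (k + 2) - (j + 1) := rfl
          rw [s0] at hA
          rw [s1] at hB
          have e6 : stern 1 = 1 := by simp [stern]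
          rw [e6]
          have e7 : 2 ^ (k + 2) - (j + 1) = 2 ^ (k + 2) - (j + 1) := rfl
          -- hB is about stern (2^(k+2) - (j+1)), goal too
          linear_combination hA + hB
        · have hj1 : 2 ^ k + 1 ≤ j := by omega
          have hj2 : j + 1 ≤ 2 ^ (k + 1) := by omega
          have e1 : 2 ^ (k + 3) - (2 * j + 1) = 2 * (2 ^ (k + 2) - (j + 1)) + 1 := by omega
          have e2 : 2 ^ (k + 2) + (2 * j + 1) = 2 * (2 ^ (k + 1) + j) + 1 := by omega
          have e3 : 2 * j + 1 - 2 ^ (k + 1) = 2 * (j - 2 ^ k) + 1 := by omega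
          rw [e1, e2, e3, stern_two_mul_add_one, stern_two_mul_add_one, stern_two_mul_add_one]
          have e4 : 2 ^ (k + 2) - (j + 1) + 1 = 2 ^ (k + 2) - j := by omega
          have e5 : j - 2 ^ k + 1 = j + 1 - 2 ^ k := by omega
          rw [e4, e5]
          have h6 := ih2 (j + 1) (by omega) hj2
          rw [show 2 ^ (k + 1) + (j + 1) = 2 ^ (k + 1) + j + 1 by omega] at h6
          linear_combination h6 + ih2 j hj1 (by omega)

theorem stern_symmetry (n : ℕ) (hn : 1 ≤ n) :
    (∀ i : ℕ, i ≤ 2 ^ (n - 1) →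
      stern (2 ^ (n + 1) - i) - stern (2 ^ n + i) =
        X * (X - 1) * stern (2 ^ (n - 1) - i)) ∧
    (∀ i : ℕ, 2 ^ (n - 1) + 1 ≤ i → i ≤ 2 ^ n →
      stern (2 ^ (n + 1) - i) - stern (2 ^ n + i) =
        -(X * (X - 1)) * stern (i - 2 ^ (n - 1))) := by
  obtain ⟨k, rfl⟩ : ∃ k, n = k + 1 := ⟨n - 1, by omega⟩
  simpa using stern_key k
end

section
/- The special values of the Stern polynomials satisfy: (1) for every natural number n, B_n(0) = 1 if n is odd and B_n(0) = 0 if n is even; (2) for every natural number n, B_n(-1) = 0 if n ≡ 0 (mod 3), B_n(-1) = 1 if n ≡ 1 (mod 3), and B_n(-1) = -1 if n ≡ 2 (mod 3); (3) for every natural number n, B_n(2) = n. -/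
open Polynomial

lemma stern_even_eq (m : ℕ) : stern (2 * m + 2) = X * stern (m + 1) := by
  rw [stern]
  simp [Nat.mul_div_cancel_left]

lemma stern_odd_eq (m : ℕ) : stern (2 * m + 3) = stern (m + 1) + stern (m + 2) := by
  rw [show 2 * m + 3 = (2 * m + 1) + 2 by ring, stern]
  have h1 : (2 * m + 1) % 2 = 1 := by omega
  have h2 : (2 * m + 1) / 2 = m := by omega
  simp [h1, h2]

theorem stern_special_values (n : ℕ) :
    ((Odd n → Polynomial.eval (0 : ℤ) (stern n) = 1) ∧
      (Even n → Polynomial.eval (0 : ℤ) (stern n) = 0)) ∧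
    ((n % 3 = 0 → Polynomial.eval (-1 : ℤ) (stern n) = 0) ∧
      (n % 3 = 1 → Polynomial.eval (-1 : ℤ) (stern n) = 1) ∧
      (n % 3 = 2 → Polynomial.eval (-1 : ℤ) (stern n) = -1)) ∧
    Polynomial.eval (2 : ℤ) (stern n) = (n : ℤ) := by
  induction n using Nat.strong_induction_on with
  | _ n IH =>
    match n with
    | 0 => simp [stern]
    | 1 => simp [stern, Nat.odd_iff, Nat.even_iff]
    | n + 2 =>
      rcases Nat.even_or_odd n with ⟨m, hm⟩ | ⟨m, hm⟩
      · -- n + 2 = 2*m + 2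
        have hn : n = 2 * m := by omega
        subst hn
        obtain ⟨⟨_, _⟩, ⟨h0, h1, h2⟩, he⟩ := IH (m + 1) (by omega)
        rw [stern_even_eq]
        refine ⟨⟨?_, fun _ => by simp⟩, ⟨?_, ?_, ?_⟩, ?_⟩
        · intro h; rw [Nat.odd_iff] at h; omega
        · intro h; have : (m + 1) % 3 = 0 := by omega
          simp [h0 this]
        · intro h; have : (m + 1) % 3 = 2 := by omega
          simp [h2 this]
        · intro h; have : (m + 1) % 3 = 1 := by omega
          simp [h1 this]
        · simp only [eval_mul, eval_X, he]; push_cast; ring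
      · -- n + 2 = 2*m + 3
        have hn : n = 2 * m + 1 := by omega
        subst hn
        obtain ⟨⟨ho1, he1⟩, ⟨a0, a1, a2⟩, ae⟩ := IH (m + 1) (by omega)
        obtain ⟨⟨ho2, he2⟩, ⟨b0, b1, b2⟩, be⟩ := IH (m + 2) (by omega)
        rw [show 2 * m + 1 + 2 = 2 * m + 3 by ring, stern_odd_eq]
        simp only [eval_add]
        refine ⟨⟨fun _ => ?_, fun h => ?_⟩, ⟨?_, ?_, ?_⟩, ?_⟩
        · rcases Nat.even_or_odd (m + 1) with h | h
          · rw [he1 h, ho2 (by rw [Nat.even_iff] at h; rw [Nat.odd_iff]; omega)]; norm_num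
          · rw [ho1 h, he2 (by rw [Nat.odd_iff] at h; rw [Nat.even_iff]; omega)]; norm_num
        · rw [Nat.even_iff] at h; omega
        · intro h
          have h1 : (m + 1) % 3 = 1 := by omega
          have h2 : (m + 2) % 3 = 2 := by omega
          rw [a1 h1, b2 h2]; ring
        · intro h
          have h1 : (m + 1) % 3 = 0 := by omega
          have h2 : (m + 2) % 3 = 1 := by omega
          rw [a0 h1, b1 h2]; ring
        · intro h
          have h1 : (m + 1) % 3 = 2 := by omega
          have h2 : (m + 2) % 3 = 0 := by omega
          rw [a2 h1, b0 h2]; ring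
        · rw [ae, be]; push_cast; ring
end
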